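/- The 3-dimensional simple Lie algebra sl₂ over an algebraically closed field of characteristic 0 admits a nontrivial (−1)-derivation, i.e. a nonzero linear map φ with φ([x,y]) = −(φ(x)·y + x·φ(y)) (product denoting the Lie bracket) that is not a linear combination of elements of the centroid. -/

import Mathlib

/-!
With `e = E₀₁`, `f = E₁₀`, the map `x ↦ tr(x f) f = x₀₁ f` (the rank-one map `f ⊗ f` of the trace
form) sends `e ↦ f` and kills `h` and `f`; the `(-1)`-derivation identity is then a `2 × 2` matrix
computation using only `tr x = 0`.
-/

open Matrix

namespace LieAlgebra.SpecialLinear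

attribute [local instance 100] LieRing.ofAssociativeRing

variable (R : Type*) [CommRing R]

def upperToLower : sl (Fin 2) R →ₗ[R] sl (Fin 2) R :=
  single 1 0 (by decide) ∘ₗ entryLinearMap R R 0 1 ∘ₗ (sl (Fin 2) R).toSubmodule.subtype

variable {R}

@[simp]
theorem val_upperToLower (x : sl (Fin 2) R) :
    (upperToLower R x).val = Matrix.single 1 0 (x.val 0 1) :=
  rfl

theorem val_one_one_eq_neg (x : sl (Fin 2) R) : x.val 1 1 = -x.val 0 0 := by
  have htr : x.val.trace = 0 := x.2
  rw [trace_fin_two] at htr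
  exact eq_neg_of_add_eq_zero_right htr

theorem upperToLower_lie (x y : sl (Fin 2) R) :
    upperToLower R ⁅x, y⁆ = -(⁅upperToLower R x, y⁆ + ⁅x, upperToLower R y⁆) := by
  have hx := val_one_one_eq_neg x
  have hy := val_one_one_eq_neg y
  ext i j
  simp only [NegMemClass.coe_neg, AddMemClass.coe_add, LieSubalgebra.coe_bracket,
    val_upperToLower, Ring.lie_def]
  fin_cases i <;> fin_cases j <;> simp [mul_apply, hx, hy] <;> ring

theorem upperToLower_ne_smul_id [Nontrivial R] (c : R) : upperToLower R ≠ c • LinearMap.id := by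
  intro h
  have h₁₀ := congr_arg (fun φ : sl (Fin 2) R →ₗ[R] sl (Fin 2) R ↦
    (φ (single 0 1 (by decide) 1)).val 1 0) h
  simp at h₁₀

end LieAlgebra.SpecialLinear

open LieAlgebra.SpecialLinear in
theorem sl2_has_nontrivial_minus_one_derivation_general (K : Type*) [Field K] :
    ∃ φ : ↥(sl (Fin 2) K) →ₗ[K] ↥(sl (Fin 2) K),
      φ ≠ 0 ∧
      (∀ x y : ↥(sl (Fin 2) K), φ ⁅x, y⁆ = -(⁅φ x, y⁆ + ⁅x, φ y⁆)) ∧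
      (∀ c : K, φ ≠ c • LinearMap.id) :=
  ⟨upperToLower K, by simpa using upperToLower_ne_smul_id (0 : K), upperToLower_lie,
    upperToLower_ne_smul_id⟩

open LieAlgebra.SpecialLinear in
/-- sl₂ over an algebraically closed field of characteristic 0 admits a
nontrivial (−1)-derivation: a nonzero linear map φ with φ[x,y] = −([φx,y] + [x,φy])
which is not a scalar multiple of the identity. -/
theorem sl2_has_nontrivial_minus_one_derivation (K : Type*) [Field K] [IsAlgClosed K]
    [CharZero K] :
    ∃ φ : ↥(sl (Fin 2) K) →ₗ[K] ↥(sl (Fin 2) K),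
      φ ≠ 0 ∧
      (∀ x y : ↥(sl (Fin 2) K), φ ⁅x, y⁆ = -(⁅φ x, y⁆ + ⁅x, φ y⁆)) ∧
      (∀ c : K, φ ≠ c • LinearMap.id) :=
  sl2_has_nontrivial_minus_one_derivation_general K
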